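/- Let n, s be positive integers. Let S be an s×s real matrix, h ∈ ℝ^s, A an (n+1)×(n+1) real matrix, b, l, g column vectors with b, l ∈ ℝ^{n+1} and g ∈ ℝ^s, c = e₁ᵀ the first-coordinate row vector in ℝ^{n+1}, and F an s×s real matrix, with both F and A − l·c Hurwitz. Let Q be an (n+1)×s real matrix with Q·S = (A − l·c)·Q + b·hᵀ, and let M be an invertible s×s real matrix with M·S − F·M = g·Q₍₁₎, where Q₍₁₎ denotes the first row of Q. Set ψ_uᵀ := hᵀ·M⁻¹. Suppose u : ℝ → ℝ is continuous and w : ℝ → ℝ^s, x, p : ℝ → ℝ^{n+1}, ξ : ℝ → ℝ^s are differentiable and satisfy for all t ≥ 0: w'(t) = S·w(t), x'(t) = A·x(t) + b·(u(t) + hᵀ·w(t)), p'(t) = A·p(t) + b·u(t) + l·(x₁(t) − p₁(t)), and ξ'(t) = F·ξ(t) + g·(x₁(t) − p₁(t)). Then the disturbance estimate d̂₂(t) := ψ_uᵀ·ξ(t) converges exponentially to the disturbance d₂(t) := hᵀ·w(t): there exist C > 0 and λ > 0 such that |ψ_uᵀ·ξ(t) − hᵀ·w(t)| ≤ C·e^{−λ·t}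 for all t ≥ 0. -/

import Mathlib

open Matrix

/-- A real square matrix is Hurwitz if every eigenvalue of the matrix, regarded as a
matrix over `ℂ`, has strictly negative real part. -/
def IsHurwitz {n : Type*} [Fintype n] [DecidableEq n] (M : Matrix n n ℝ) : Prop :=
  ∀ μ ∈ spectrum ℂ (M.map (algebraMap ℝ ℂ)), μ.re < 0

/-!
Put `ε = x - p - Q w` and `ζ = ξ - M w`. The two Sylvester equations turn observer and filter
into the autonomous block-triangular system `ε' = (A - l c) ε`, `ζ' = F ζ + ε₁ g`, whose matrix
is Hurwitz because its characteristic polynomial is the product of those of `A - l c` and `F`;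
and since `ψ_uᵀ M = hᵀ`, the estimation error is exactly `ψ_uᵀ ζ`.

Solutions of `z' = B z` with `B` Hurwitz decay exponentially: `exp B` is a polynomial in `B`, so
by the spectral mapping theorem and an eigenvector computation its spectrum lies in
`exp (spectrum B)`, inside the open unit disc. Gelfand's formula then gives `‖exp (N • B)‖ < 1`
for some `N`, and the semigroup law `exp ((s + N) • B) = exp (s • B) * exp (N • B)` turns this
into an exponential bound on `‖exp (t • B)‖`.
-/

open NormedSpace Polynomial

def ExpDecay {E : Type*} [SeminormedAddCommGroup E] (f : ℝ → E) : Prop :=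
  ∃ C > (0 : ℝ), ∃ lam > (0 : ℝ), ∀ t : ℝ, 0 ≤ t → ‖f t‖ ≤ C * Real.exp (-lam * t)

namespace ExpDecay

variable {E F : Type*} [SeminormedAddCommGroup E] [SeminormedAddCommGroup F] {f : ℝ → E}

theorem of_norm_le (hf : ExpDecay f) {g : ℝ → F} (K : ℝ)
    (hg : ∀ t, 0 ≤ t → ‖g t‖ ≤ K * ‖f t‖) : ExpDecay g := by
  obtain ⟨C, hC, lam, hlam, hfC⟩ := hf
  refine ⟨max K 1 * C, by positivity, lam, hlam, fun t ht => ?_⟩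
  calc ‖g t‖ ≤ K * ‖f t‖ := hg t ht
    _ ≤ max K 1 * (C * Real.exp (-lam * t)) :=
      mul_le_mul (le_max_left _ _) (hfC t ht) (norm_nonneg _) (by positivity)
    _ = max K 1 * C * Real.exp (-lam * t) := by ring

theorem map_clm [NormedSpace ℝ E] [NormedSpace ℝ F] (hf : ExpDecay f) (L : E →L[ℝ] F) :
    ExpDecay fun t => L (f t) :=
  hf.of_norm_le ‖L‖ fun t _ => L.le_opNorm (f t)

end ExpDecay

section Semigroup

variable {𝔸 : Type*} [NormedRing 𝔸] [NormedAlgebra ℚ 𝔸] [NormedAlgebra ℝ 𝔸] [CompleteSpace 𝔸]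

theorem norm_exp_smul_add_mul_le {a : 𝔸} {τ K : ℝ}
    (hK : ∀ s ∈ Set.Icc 0 τ, ‖exp (s • a)‖ ≤ K) (k : ℕ) {s : ℝ} (hs : s ∈ Set.Icc 0 τ) :
    ‖exp ((s + k * τ) • a)‖ ≤ K * ‖exp (τ • a)‖ ^ k := by
  induction k with
  | zero => simpa using hK s hs
  | succ k ih =>
    rw [Nat.cast_succ, show s + (k + 1) * τ = (s + k * τ) + τ by ring, add_smul,
      NormedSpace.exp_add_of_commute (((Commute.refl a).smul_left _).smul_right _), pow_succ,
      ← mul_assoc]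
    exact (norm_mul_le _ _).trans (mul_le_mul_of_nonneg_right ih (norm_nonneg _))

theorem expDecay_exp_smul_of_norm_lt_one (a : 𝔸) {τ : ℝ} (hτ : 0 < τ) (ha : ‖exp (τ • a)‖ < 1) :
    ExpDecay fun t : ℝ => exp (t • a) := by
  -- `q` stays away from `0`, so that `Real.log q` is not the junk value `Real.log 0 = 0`.
  set q := max ‖exp (τ • a)‖ (1 / 2)
  have hq0 : 0 < q := lt_max_of_lt_right (by norm_num)
  have hlogq : Real.log q < 0 := Real.log_neg hq0 (max_lt ha (by norm_num))
  obtain ⟨K, hK⟩ := (isCompact_Icc (a := (0 : ℝ)) (b := τ)).exists_bound_of_continuousOn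
    (f := fun s : ℝ => exp (s • a)) (by fun_prop)
  have hK0 : 0 ≤ K := (norm_nonneg _).trans (hK 0 ⟨le_rfl, hτ.le⟩)
  set lam := -Real.log q / τ
  refine ⟨K / q + 1, by positivity, lam, div_pos (neg_pos.2 hlogq) hτ, fun t ht => ?_⟩
  set k := ⌊t / τ⌋₊
  have hkt : k * τ ≤ t := (le_div_iff₀ hτ).1 (Nat.floor_le (div_nonneg ht hτ.le))
  have htk : t / τ ≤ k + 1 := (Nat.lt_floor_add_one _).le
  have hpow : q ^ k ≤ Real.exp (-lam * t) / q := by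
    rw [le_div_iff₀ hq0, ← pow_succ, ← Real.exp_log (pow_pos hq0 _), Real.log_pow, Real.exp_le_exp]
    push_cast
    calc (k + 1 : ℝ) * Real.log q ≤ t / τ * Real.log q := mul_le_mul_of_nonpos_right htk hlogq.le
      _ = -lam * t := by ring
  calc ‖exp (t • a)‖ = ‖exp ((t - k * τ + k * τ) • a)‖ := by rw [sub_add_cancel]
    _ ≤ K * ‖exp (τ • a)‖ ^ k :=
      norm_exp_smul_add_mul_le hK k ⟨sub_nonneg.2 hkt, by linarith [(div_le_iff₀ hτ).1 htk]⟩
    _ ≤ K * q ^ k := by gcongr; exact le_max_left _ _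
    _ ≤ K * (Real.exp (-lam * t) / q) := by gcongr
    _ ≤ (K / q + 1) * Real.exp (-lam * t) := by
      rw [mul_div_assoc', add_mul, one_mul, div_mul_eq_mul_div]
      exact le_add_of_nonneg_right (Real.exp_pos _).le

end Semigroup

section MatrixExp

attribute [local instance] Matrix.linftyOpNormedRing Matrix.linftyOpNormedAlgebra

namespace Matrix

variable {m : Type*} [Fintype m] [DecidableEq m]

noncomputable def mulVecCLM : Matrix m m ℂ →L[ℝ] (m → ℂ) →L[ℝ] m → ℂ :=
  LinearMap.mkContinuous₂ (LinearMap.mk₂ ℝ (fun (A : Matrix m m ℂ) (v : m → ℂ) => A *ᵥ v)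
    add_mulVec smul_mulVec mulVec_add fun c A v => mulVec_smul A c v) 1
    fun A v => by rw [one_mul]; exact linfty_opNorm_mulVec A v

theorem eq_exp_smul_mulVec_of_hasDerivAt {B : Matrix m m ℂ} {z : ℝ → m → ℂ}
    (hz : ∀ t, 0 ≤ t → HasDerivAt z (B *ᵥ z t) t) {t : ℝ} (ht : 0 ≤ t) :
    z t = exp (t • B) *ᵥ z 0 := by
  have hderiv : ∀ u, 0 ≤ u → HasDerivAt (fun u => exp (u • -B) *ᵥ z u) 0 u := by
    intro u hu
    have hexp := mulVecCLM.hasFDerivAt (x := exp (u • -B)) |>.comp_hasDerivAt u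
      (hasDerivAt_exp_smul_const' (-B) u)
    refine (hexp.clm_apply (hz u hu)).congr_deriv ?_
    change (-B * exp (u • -B)) *ᵥ z u + exp (u • -B) *ᵥ (B *ᵥ z u) = 0
    rw [mulVec_mulVec, ← ((Commute.refl B).neg_right.smul_right u).exp_right.eq, neg_mul,
      neg_mulVec, neg_add_cancel]
  have hconst : exp (t • -B) *ᵥ z t = z 0 := by
    have := constant_of_has_deriv_right_zero (f := fun u => exp (u • -B) *ᵥ z u) (a := 0) (b := t)
      (fun u hu => (hderiv u hu.1).continuousAt.continuousWithinAt)
      (fun u hu => (hderiv u hu.1).hasDerivWithinAt)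
    simpa using this t ⟨ht, le_rfl⟩
  have hinv : exp (t • B) * exp (t • -B) = 1 := by
    rw [smul_neg, ← exp_add_of_commute _ _
      (((Commute.refl B).smul_left t).smul_right _).neg_right, add_neg_cancel, exp_zero]
  rw [← hconst, mulVec_mulVec, hinv, one_mulVec]

theorem exp_mulVec_of_mulVec_eq_smul {B : Matrix m m ℂ} {μ : ℂ} {v : m → ℂ}
    (hv : B *ᵥ v = μ • v) : exp B *ᵥ v = Complex.exp μ • v := by
  have hz : ∀ t : ℝ, 0 ≤ t → HasDerivAt (fun t : ℝ => Complex.exp (t * μ) • v)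
      (B *ᵥ (Complex.exp (t * μ) • v)) t := by
    intro t _
    rw [mulVec_smul, hv, smul_smul]
    exact (((hasDerivAt_id (t : ℂ)).mul_const μ).cexp.comp_ofReal).smul_const v |>.congr_deriv
      (by simp)
  simpa using (eq_exp_smul_mulVec_of_hasDerivAt hz zero_le_one).symm

theorem exists_aeval_eq_exp (B : Matrix m m ℂ) : ∃ q : ℂ[X], aeval B q = exp B := by
  rw [← AlgHom.mem_range, ← Algebra.adjoin_singleton_eq_range_aeval]
  exact exp_mem (R := ℂ) (s := Algebra.adjoin ℂ {B})
    (Algebra.adjoin ℂ {B}).toSubmodule.closed_of_finiteDimensional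
    (Algebra.self_mem_adjoin_singleton ℂ B)

theorem spectrum_exp_subset [Nonempty m] (B : Matrix m m ℂ) :
    spectrum ℂ (exp B) ⊆ Complex.exp '' spectrum ℂ B := by
  obtain ⟨q, hq⟩ := exists_aeval_eq_exp B
  rw [← hq, spectrum.map_polynomial_aeval]
  rintro _ ⟨μ, hμ, rfl⟩
  have hev : Module.End.HasEigenvalue (toLinAlgEquiv' B) μ := by
    rwa [Module.End.hasEigenvalue_iff_mem_spectrum, AlgEquiv.spectrum_eq]
  obtain ⟨v, hv⟩ := hev.exists_hasEigenvector
  refine ⟨μ, hμ, smul_left_injective ℂ hv.2 ?_⟩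
  calc Complex.exp μ • v = exp B *ᵥ v := (exp_mulVec_of_mulVec_eq_smul hv.apply_eq_smul).symm
    _ = aeval (toLinAlgEquiv' B) q v := by rw [aeval_algEquiv, AlgHom.comp_apply, hq]; rfl
    _ = q.eval μ • v := Module.End.aeval_apply_of_hasEigenvector hv

theorem spectralRadius_exp_lt_one [Nonempty m] {B : Matrix m m ℂ}
    (hB : ∀ μ ∈ spectrum ℂ B, μ.re < 0) : spectralRadius ℂ (exp B) < 1 := by
  refine spectrum.spectralRadius_lt_of_forall_lt (r := 1) _ fun z hz => ?_
  obtain ⟨μ, hμ, rfl⟩ := spectrum_exp_subset B hz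
  rw [← NNReal.coe_lt_coe, coe_nnnorm, Complex.norm_exp, NNReal.coe_one, Real.exp_lt_one_iff]
  exact hB μ hμ

theorem exists_norm_exp_nsmul_lt_one [Nonempty m] {B : Matrix m m ℂ}
    (hB : ∀ μ ∈ spectrum ℂ B, μ.re < 0) : ∃ N : ℕ, 0 < N ∧ ‖exp (N • B)‖ < 1 := by
  obtain ⟨N, hN⟩ :=
    ((spectrum.pow_nnnorm_pow_one_div_tendsto_nhds_spectralRadius (exp B)).eventually
      (gt_mem_nhds (spectralRadius_exp_lt_one hB))).exists_forall_of_atTop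
  refine ⟨N + 1, N.succ_pos, ?_⟩
  rw [exp_nsmul, ← coe_nnnorm, ← NNReal.coe_one, NNReal.coe_lt_coe, ← ENNReal.coe_lt_one_iff]
  by_contra! hge
  exact (hN (N + 1) N.le_succ).not_ge (ENNReal.one_le_rpow hge (by positivity))

end Matrix

theorem IsHurwitz.expDecay_of_hasDerivAt {m : Type*} [Fintype m] [DecidableEq m] [Nonempty m]
    {B : Matrix m m ℝ} (hB : IsHurwitz B) {z : ℝ → m → ℝ}
    (hz : ∀ t, 0 ≤ t → HasDerivAt z (B *ᵥ z t) t) : ExpDecay z := by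
  set Bc := B.map (algebraMap ℝ ℂ)
  set zc : ℝ → m → ℂ := fun t i => z t i
  have hzc : ∀ t, 0 ≤ t → HasDerivAt zc (Bc *ᵥ zc t) t := fun t ht =>
    hasDerivAt_pi.2 fun i => (hasDerivAt_pi.1 (hz t ht) i).ofReal_comp.congr_deriv
      (RingHom.map_mulVec (algebraMap ℝ ℂ) B (z t) i)
  obtain ⟨N, hN, hBN⟩ := exists_norm_exp_nsmul_lt_one hB
  have hexp : ExpDecay fun t : ℝ => exp (t • Bc) :=
    expDecay_exp_smul_of_norm_lt_one Bc (Nat.cast_pos.2 hN) (by rwa [Nat.cast_smul_eq_nsmul])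
  have hzc_decay : ExpDecay zc := hexp.of_norm_le ‖zc 0‖ fun t ht => by
    rw [eq_exp_smul_mulVec_of_hasDerivAt hzc ht, mul_comm]
    exact linfty_opNorm_mulVec _ _
  simpa [zc] using hzc_decay.map_clm
    (ContinuousLinearMap.pi fun i => Complex.reCLM.comp (ContinuousLinearMap.proj i))

end MatrixExp

theorem IsHurwitz.fromBlocks_zero₁₂ {ι κ : Type*} [Fintype ι] [Fintype κ] [DecidableEq ι]
    [DecidableEq κ] {A : Matrix ι ι ℝ} {D : Matrix κ κ ℝ} (hA : IsHurwitz A) (hD : IsHurwitz D)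
    (C : Matrix κ ι ℝ) : IsHurwitz (fromBlocks A 0 C D) := by
  intro μ hμ
  rw [fromBlocks_map, Matrix.map_zero _ (map_zero _), mem_spectrum_iff_isRoot_charpoly,
    charpoly_fromBlocks_zero₁₂, IsRoot, eval_mul, mul_eq_zero] at hμ
  rcases hμ with hμ | hμ
  · exact hA μ (mem_spectrum_iff_isRoot_charpoly.2 hμ)
  · exact hD μ (mem_spectrum_iff_isRoot_charpoly.2 hμ)

theorem HasDerivAt.sumElim {ι κ : Type*} {f : ℝ → ι → ℝ} {g : ℝ → κ → ℝ} {f' : ι → ℝ}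
    {g' : κ → ℝ} {t : ℝ} (hf : HasDerivAt f f' t) (hg : HasDerivAt g g' t) :
    HasDerivAt (fun t => Sum.elim (f t) (g t)) (Sum.elim f' g') t :=
  hasDerivAt_pi.2 <| Sum.rec (hasDerivAt_pi.1 hf) (hasDerivAt_pi.1 hg)

section Observer

variable {ι κ : Type*} [Fintype ι] [Fintype κ]

theorem HasDerivAt.const_mulVec (Q : Matrix ι κ ℝ) {w : ℝ → κ → ℝ} {w' : κ → ℝ} {t : ℝ}
    (hw : HasDerivAt w w' t) : HasDerivAt (fun t => Q *ᵥ w t) (Q *ᵥ w') t :=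
  (mulVecLin Q).toContinuousLinearMap.hasFDerivAt.comp_hasDerivAt t hw

theorem HasDerivAt.sub_mulVec_of_mul_eq {K : Matrix ι ι ℝ} {S : Matrix κ κ ℝ}
    {Q R : Matrix ι κ ℝ} (hQ : Q * S = K * Q + R) {y : ℝ → ι → ℝ} {w : ℝ → κ → ℝ} {e : ι → ℝ}
    {t : ℝ} (hy : HasDerivAt y (K *ᵥ y t + e) t) (hw : HasDerivAt w (S *ᵥ w t) t) :
    HasDerivAt (fun t => y t - Q *ᵥ w t) (K *ᵥ (y t - Q *ᵥ w t) + (e - R *ᵥ w t)) t := by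
  refine (hy.sub (hw.const_mulVec Q)).congr_deriv ?_
  rw [mulVec_mulVec, hQ, add_mulVec, mulVec_sub, mulVec_mulVec]
  abel

end Observer

theorem iadrc_disturbance_estimate_exponential_general (n s : ℕ)
    (S : Matrix (Fin s) (Fin s) ℝ) (h : Fin s → ℝ)
    (A : Matrix (Fin (n + 1)) (Fin (n + 1)) ℝ)
    (b l : Fin (n + 1) → ℝ) (g : Fin s → ℝ)
    (F : Matrix (Fin s) (Fin s) ℝ)
    (hF : IsHurwitz F)
    (hAlc : IsHurwitz (A - Matrix.vecMulVec l (Pi.single 0 1 : Fin (n + 1) → ℝ)))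
    (Q : Matrix (Fin (n + 1)) (Fin s) ℝ)
    (hQ : Q * S = (A - Matrix.vecMulVec l (Pi.single 0 1 : Fin (n + 1) → ℝ)) * Q +
      Matrix.vecMulVec b h)
    (M : Matrix (Fin s) (Fin s) ℝ) (hM : IsUnit M.det)
    (hMS : M * S - F * M = Matrix.vecMulVec g (Q 0))
    (u : ℝ → ℝ)
    (w : ℝ → Fin s → ℝ) (x p : ℝ → Fin (n + 1) → ℝ) (ξ : ℝ → Fin s → ℝ)
    (hw : ∀ t : ℝ, 0 ≤ t → HasDerivAt w (S.mulVec (w t)) t)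
    (hx : ∀ t : ℝ, 0 ≤ t → HasDerivAt x (A.mulVec (x t) + (u t + h ⬝ᵥ w t) • b) t)
    (hp : ∀ t : ℝ, 0 ≤ t →
      HasDerivAt p (A.mulVec (p t) + u t • b + (x t 0 - p t 0) • l) t)
    (hξ : ∀ t : ℝ, 0 ≤ t → HasDerivAt ξ (F.mulVec (ξ t) + (x t 0 - p t 0) • g) t) :
    ∃ C > (0 : ℝ), ∃ lam > (0 : ℝ), ∀ t : ℝ, 0 ≤ t →
      |Matrix.vecMul h M⁻¹ ⬝ᵥ ξ t - h ⬝ᵥ w t| ≤ C * Real.exp (-lam * t) := by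
  set c : Fin (n + 1) → ℝ := Pi.single 0 1
  set ε := fun t => x t - p t - Q *ᵥ w t
  set ζ := fun t => ξ t - M *ᵥ w t
  have hε : ∀ t, 0 ≤ t → HasDerivAt ε ((A - vecMulVec l c) *ᵥ ε t) t := fun t ht => by
    have hxp : HasDerivAt (fun t => x t - p t)
        ((A - vecMulVec l c) *ᵥ (x t - p t) + (h ⬝ᵥ w t) • b) t :=
      ((hx t ht).sub (hp t ht)).congr_deriv (by
        simp [c, sub_mulVec, mulVec_sub, vecMulVec_mulVec]; module)
    simpa [vecMulVec_mulVec] using hxp.sub_mulVec_of_mul_eq hQ (hw t ht)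
  have hζ : ∀ t, 0 ≤ t → HasDerivAt ζ (F *ᵥ ζ t + ε t 0 • g) t := fun t ht => by
    refine ((hξ t ht).sub_mulVec_of_mul_eq (sub_eq_iff_eq_add'.1 hMS) (hw t ht)).congr_deriv ?_
    simp [ε, vecMulVec_mulVec, sub_smul]
    rfl
  have hz : ∀ t, 0 ≤ t → HasDerivAt (fun t => Sum.elim (ε t) (ζ t))
      (fromBlocks (A - vecMulVec l c) 0 (vecMulVec g c) F *ᵥ Sum.elim (ε t) (ζ t)) t :=
    fun t ht => by
      simpa [fromBlocks_mulVec, vecMulVec_mulVec, c, add_comm] using (hε t ht).sumElim (hζ t ht)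
  have hdecay := (hAlc.fromBlocks_zero₁₂ hF _).expDecay_of_hasDerivAt hz
  obtain ⟨C, hC, lam, hlam, hψdecay⟩ := hdecay.map_clm
    (LinearMap.toContinuousLinearMap (dotProductEquiv ℝ _ (Sum.elim 0 (vecMul h M⁻¹))))
  refine ⟨C, hC, lam, hlam, fun t ht => ?_⟩
  have hψ : vecMul h M⁻¹ ⬝ᵥ ξ t - h ⬝ᵥ w t = vecMul h M⁻¹ ⬝ᵥ ζ t := by
    rw [dotProduct_sub, dotProduct_mulVec, vecMul_vecMul, nonsing_inv_mul M hM, vecMul_one]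
  simpa [hψ, sumElim_dotProduct_sumElim] using hψdecay t ht

/-- **Exponential disturbance estimation (known-`S` case, Procedure 1).** The disturbance
`d₂ = hᵀ·w` generated by the exosystem `w' = S·w` acting on the plant
`x' = A·x + b·(u + d₂)` with output `x₁`, estimated via the extended state observer `p`,
the auxiliary filter `ξ' = F·ξ + g·(x₁ − p₁)` and the gain `ψ_uᵀ = hᵀ·M⁻¹` obtained from
the Sylvester equations `Q·S = (A − l·c)·Q + b·hᵀ` and `M·S − F·M = g·Q₍₁₎` (with
`c = e₁ᵀ`, and `F`, `A − l·c` Hurwitz, `M` invertible), is recovered exponentially: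
`|ψ_uᵀ·ξ(t) − hᵀ·w(t)| ≤ C·e^{−λ·t}` for all `t ≥ 0`. -/
theorem iadrc_disturbance_estimate_exponential (n s : ℕ) (hn : 0 < n) (hs : 0 < s)
    (S : Matrix (Fin s) (Fin s) ℝ) (h : Fin s → ℝ)
    (A : Matrix (Fin (n + 1)) (Fin (n + 1)) ℝ)
    (b l : Fin (n + 1) → ℝ) (g : Fin s → ℝ)
    (F : Matrix (Fin s) (Fin s) ℝ)
    (hF : IsHurwitz F)
    (hAlc : IsHurwitz (A - Matrix.vecMulVec l (Pi.single 0 1 : Fin (n + 1) → ℝ)))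
    (Q : Matrix (Fin (n + 1)) (Fin s) ℝ)
    (hQ : Q * S = (A - Matrix.vecMulVec l (Pi.single 0 1 : Fin (n + 1) → ℝ)) * Q +
      Matrix.vecMulVec b h)
    (M : Matrix (Fin s) (Fin s) ℝ) (hM : IsUnit M.det)
    (hMS : M * S - F * M = Matrix.vecMulVec g (Q 0))
    (u : ℝ → ℝ) (hu : Continuous u)
    (w : ℝ → Fin s → ℝ) (x p : ℝ → Fin (n + 1) → ℝ) (ξ : ℝ → Fin s → ℝ)
    (hw : ∀ t : ℝ, 0 ≤ t → HasDerivAt w (S.mulVec (w t)) t)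
    (hx : ∀ t : ℝ, 0 ≤ t → HasDerivAt x (A.mulVec (x t) + (u t + h ⬝ᵥ w t) • b) t)
    (hp : ∀ t : ℝ, 0 ≤ t →
      HasDerivAt p (A.mulVec (p t) + u t • b + (x t 0 - p t 0) • l) t)
    (hξ : ∀ t : ℝ, 0 ≤ t → HasDerivAt ξ (F.mulVec (ξ t) + (x t 0 - p t 0) • g) t) :
    ∃ C > (0 : ℝ), ∃ lam > (0 : ℝ), ∀ t : ℝ, 0 ≤ t →
      |Matrix.vecMul h M⁻¹ ⬝ᵥ ξ t - h ⬝ᵥ w t| ≤ C * Real.exp (-lam * t) :=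
  iadrc_disturbance_estimate_exponential_general n s S h A b l g F hF hAlc Q hQ M hM hMS u w x p ξ
    hw hx hp hξ
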